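/- Let n ≥ 1, λ, μ ∈ ℝ with δ = μ−λ ≠ 1, and set α = λ/(1−δ). Define the map Q on first-order symbols by Q(P₁,P₀)f = P₁^i ∂_i f + α(∂_i P₁^i) f + P₀ f. Then Q is equivariant with respect to ALL smooth vector fields on ℝⁿ: for every smooth vector field X, every first-order symbol (P₁,P₀), and every smooth f, Q(L_X^δ(P₁,P₀)) f = L_X^μ(Q(P₁,P₀) f) − Q(P₁,P₀)(L_X^λ f). -/

import Mathlib

open scoped BigOperators

noncomputable section

/-- Partial derivative of a function on `ℝⁿ` in the `i`-th coordinate direction. -/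
def pd {n : ℕ} (i : Fin n) (f : (Fin n → ℝ) → ℝ) : (Fin n → ℝ) → ℝ :=
  fun x => fderiv ℝ f x (Pi.single i 1)

/-- Diagonal entries of the flat metric of signature `(p, n−p)`. -/
def sgn (p : ℕ) {n : ℕ} (i : Fin n) : ℝ := if (i : ℕ) < p then 1 else -1

/-- Flat metric `g_{ij} = g^{ij} = diag(1,…,1,−1,…,−1)`. -/
def gmet (p : ℕ) {n : ℕ} (i j : Fin n) : ℝ := if i = j then sgn p i else 0

/-- Divergence of a vector field on `ℝⁿ`. -/
def divg {n : ℕ} (X : Fin n → (Fin n → ℝ) → ℝ) : (Fin n → ℝ) → ℝ :=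
  fun x => ∑ k, pd k (X k) x

/-- Lie derivative of a weight-`l` density (in the trivialization). -/
def lieF {n : ℕ} (X : Fin n → (Fin n → ℝ) → ℝ) (l : ℝ) (f : (Fin n → ℝ) → ℝ) :
    (Fin n → ℝ) → ℝ :=
  fun x => (∑ k, X k x * pd k f x) + l * divg X x * f x

/-- Weight-`d` action of a vector field on the degree-2 component of a symbol. -/
def lieS2 {n : ℕ} (X : Fin n → (Fin n → ℝ) → ℝ) (d : ℝ)
    (P2 : Fin n → Fin n → (Fin n → ℝ) → ℝ) : Fin n → Fin n → (Fin n → ℝ) → ℝ :=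
  fun i j x => (∑ k, X k x * pd k (P2 i j) x) - (∑ k, P2 k j x * pd k (X i) x)
    - (∑ k, P2 i k x * pd k (X j) x) + d * divg X x * P2 i j x

/-- Weight-`d` action of a vector field on the degree-1 component of a symbol. -/
def lieS1 {n : ℕ} (X : Fin n → (Fin n → ℝ) → ℝ) (d : ℝ)
    (P1 : Fin n → (Fin n → ℝ) → ℝ) : Fin n → (Fin n → ℝ) → ℝ :=
  fun i x => (∑ k, X k x * pd k (P1 i) x) - (∑ k, P1 k x * pd k (X i) x)
    + d * divg X x * P1 i x

/-- The second-order differential operator with coefficients `(A2, A1, A0)`. -/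
def op2 {n : ℕ} (A2 : Fin n → Fin n → (Fin n → ℝ) → ℝ) (A1 : Fin n → (Fin n → ℝ) → ℝ)
    (A0 : (Fin n → ℝ) → ℝ) (f : (Fin n → ℝ) → ℝ) : (Fin n → ℝ) → ℝ :=
  fun x => (∑ i, ∑ j, A2 i j x * pd i (pd j f) x) + (∑ i, A1 i x * pd i f x) + A0 x * f x

/-- The first-order quantization map
`Q(P₁,P₀) f = P₁^i ∂_i f + α (∂_i P₁^i) f + P₀ f`. -/
def Q1op {n : ℕ} (a : ℝ) (P1 : Fin n → (Fin n → ℝ) → ℝ) (P0 : (Fin n → ℝ) → ℝ)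
    (f : (Fin n → ℝ) → ℝ) : (Fin n → ℝ) → ℝ :=
  fun x => (∑ i, P1 i x * pd i f x) + a * (∑ i, pd i (P1 i) x) * f x + P0 x * f x



section AuxLemmas

variable {n : ℕ}


@[fun_prop]
lemma contDiff_pd {f : (Fin n → ℝ) → ℝ} (hf : ContDiff ℝ (⊤ : ℕ∞) f) (i : Fin n) :
    ContDiff ℝ (⊤ : ℕ∞) (pd i f) :=
  (hf.fderiv_right (by simp)).clm_apply contDiff_const

@[fun_prop]
lemma differentiable_pd {f : (Fin n → ℝ) → ℝ} (hf : ContDiff ℝ (⊤ : ℕ∞) f) (i : Fin n) :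
    Differentiable ℝ (pd i f) :=
  (contDiff_pd hf i).differentiable (by simp)

lemma pd_add {f g : (Fin n → ℝ) → ℝ} (hf : Differentiable ℝ f) (hg : Differentiable ℝ g)
    (i : Fin n) (x : Fin n → ℝ) : pd i (fun y => f y + g y) x = pd i f x + pd i g x := by
  show fderiv ℝ (fun y => f y + g y) x _ = _
  rw [fderiv_fun_add (hf x) (hg x)]; rfl

lemma pd_sub {f g : (Fin n → ℝ) → ℝ} (hf : Differentiable ℝ f) (hg : Differentiable ℝ g)
    (i : Fin n) (x : Fin n → ℝ) : pd i (fun y => f y - g y) x = pd i f x - pd i g x := by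
  show fderiv ℝ (fun y => f y - g y) x _ = _
  rw [fderiv_fun_sub (hf x) (hg x)]; rfl

lemma pd_mul {f g : (Fin n → ℝ) → ℝ} (hf : Differentiable ℝ f) (hg : Differentiable ℝ g)
    (i : Fin n) (x : Fin n → ℝ) :
    pd i (fun y => f y * g y) x = pd i f x * g x + f x * pd i g x := by
  show fderiv ℝ (fun y => f y * g y) x _ = _
  rw [fderiv_fun_mul (hf x) (hg x)]
  simp [pd]; ring

lemma pd_sum {ι : Type*} (s : Finset ι) {F : ι → (Fin n → ℝ) → ℝ}
    (hF : ∀ j ∈ s, Differentiable ℝ (F j)) (i : Fin n) (x : Fin n → ℝ) :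
    pd i (fun y => ∑ j ∈ s, F j y) x = ∑ j ∈ s, pd i (F j) x := by
  show fderiv ℝ (fun y => ∑ j ∈ s, F j y) x _ = _
  rw [fderiv_fun_sum (fun j hj => (hF j hj) x)]; simp [pd]

lemma pd_const_mul {f : (Fin n → ℝ) → ℝ} (hf : Differentiable ℝ f) (c : ℝ)
    (i : Fin n) (x : Fin n → ℝ) : pd i (fun y => c * f y) x = c * pd i f x := by
  show fderiv ℝ (fun y => c * f y) x _ = _
  rw [fderiv_const_mul (hf x) c]; rfl

lemma pd_comm {f : (Fin n → ℝ) → ℝ} (hf : ContDiff ℝ (⊤ : ℕ∞) f) (i j : Fin n) (x : Fin n → ℝ) :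
    pd i (pd j f) x = pd j (pd i f) x := by
  have hd : Differentiable ℝ f := hf.differentiable (by simp)
  have hd2 : Differentiable ℝ (fderiv ℝ f) := (hf.fderiv_right (m := (⊤ : ℕ∞)) (by simp)).differentiable (by simp)
  have h1 : ∀ y, HasFDerivAt f (fderiv ℝ f y) y := fun y => (hd y).hasFDerivAt
  have key : ∀ (u v : Fin n), pd u (pd v f) x
      = (fderiv ℝ (fderiv ℝ f) x) (Pi.single u 1) (Pi.single v 1) := by
    intro u v
    show fderiv ℝ (fun y => fderiv ℝ f y (Pi.single v 1)) x (Pi.single u 1) = _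
    have := ((hd2 x).hasFDerivAt.clm_apply (hasFDerivAt_const (Pi.single v 1) x)).fderiv
    rw [this]; simp
  rw [key i j, key j i]
  exact second_derivative_symmetric h1 (hd2 x).hasFDerivAt _ _

@[fun_prop]
lemma contDiff_divg {X : Fin n → (Fin n → ℝ) → ℝ} (hX : ∀ k, ContDiff ℝ (⊤ : ℕ∞) (X k)) :
    ContDiff ℝ (⊤ : ℕ∞) (divg X) :=
  ContDiff.sum fun k _ => contDiff_pd (hX k) k

@[fun_prop]
lemma differentiable_divg {X : Fin n → (Fin n → ℝ) → ℝ} (hX : ∀ k, ContDiff ℝ (⊤ : ℕ∞) (X k)) :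
    Differentiable ℝ (divg X) :=
  (contDiff_divg hX).differentiable (by simp)

lemma pd_divg {X : Fin n → (Fin n → ℝ) → ℝ} (hX : ∀ k, ContDiff ℝ (⊤ : ℕ∞) (X k))
    (u : Fin n) (x : Fin n → ℝ) :
    pd u (divg X) x = ∑ k, pd u (pd k (X k)) x :=
  pd_sum Finset.univ (fun k _ => differentiable_pd (hX k) k) u x

lemma pd_lieF {X : Fin n → (Fin n → ℝ) → ℝ} {f : (Fin n → ℝ) → ℝ}
    (hX : ∀ k, ContDiff ℝ (⊤ : ℕ∞) (X k)) (hf : ContDiff ℝ (⊤ : ℕ∞) f) (l : ℝ) (x : Fin n → ℝ) (u : Fin n) :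
    pd u (lieF X l f) x
      = (∑ k, (pd u (X k) x * pd k f x + X k x * pd u (pd k f) x))
        + (l * pd u (divg X) x * f x + l * divg X x * pd u f x) := by
  have hfd : Differentiable ℝ f := hf.differentiable (by simp)
  have hXd : ∀ k, Differentiable ℝ (X k) := fun k => (hX k).differentiable (by simp)
  have hpfd : ∀ k : Fin n, Differentiable ℝ (pd k f) := fun k => differentiable_pd hf k
  have hA : Differentiable ℝ (fun y => ∑ k, X k y * pd k f y) :=
    Differentiable.fun_sum fun k _ => (hXd k).mul (hpfd k)
  have hD : Differentiable ℝ (fun y => l * divg X y) := (differentiable_divg hX).const_mul l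
  have hB : Differentiable ℝ (fun y => l * divg X y * f y) := hD.mul hfd
  have e0 : pd u (lieF X l f) x
      = pd u (fun y => (∑ k, X k y * pd k f y) + (l * divg X y) * f y) x := rfl
  have hm : ∀ k : Fin n, pd u (fun y => X k y * pd k f y) x
      = pd u (X k) x * pd k f x + X k x * pd u (pd k f) x :=
    fun k => pd_mul ((hX k).differentiable (by simp)) (differentiable_pd hf k) u x
  rw [e0, pd_add hA hB u x, pd_mul hD hfd u x,
    pd_const_mul (differentiable_divg hX) l u x,
    pd_sum (F := fun k y => X k y * pd k f y) Finset.univ (fun k _ => (hXd k).mul (hpfd k)) u x]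
  simp only [hm]

lemma pd_lieS1 {X P1 : Fin n → (Fin n → ℝ) → ℝ}
    (hX : ∀ k, ContDiff ℝ (⊤ : ℕ∞) (X k)) (hP1 : ∀ j, ContDiff ℝ (⊤ : ℕ∞) (P1 j)) (d : ℝ)
    (x : Fin n → ℝ) (u j : Fin n) :
    pd u (lieS1 X d P1 j) x
      = (∑ k, (pd u (X k) x * pd k (P1 j) x + X k x * pd u (pd k (P1 j)) x))
        - (∑ k, (pd u (P1 k) x * pd k (X j) x + P1 k x * pd u (pd k (X j)) x))
        + (d * pd u (divg X) x * P1 j x + d * divg X x * pd u (P1 j) x) := by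
  have hXd : ∀ k, Differentiable ℝ (X k) := fun k => (hX k).differentiable (by simp)
  have hP1d : ∀ k, Differentiable ℝ (P1 k) := fun k => (hP1 k).differentiable (by simp)
  have hA : Differentiable ℝ (fun y => ∑ k, X k y * pd k (P1 j) y) :=
    Differentiable.fun_sum fun k _ => (hXd k).mul (differentiable_pd (hP1 j) k)
  have hB : Differentiable ℝ (fun y => ∑ k, P1 k y * pd k (X j) y) :=
    Differentiable.fun_sum fun k _ => (hP1d k).mul (differentiable_pd (hX j) k)
  have hAB : Differentiable ℝ
      (fun y => (∑ k, X k y * pd k (P1 j) y) - (∑ k, P1 k y * pd k (X j) y)) := hA.sub hB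
  have hD : Differentiable ℝ (fun y => d * divg X y) := (differentiable_divg hX).const_mul d
  have hC : Differentiable ℝ (fun y => d * divg X y * P1 j y) := hD.mul (hP1d j)
  have hm1 : ∀ k : Fin n, pd u (fun y => X k y * pd k (P1 j) y) x
      = pd u (X k) x * pd k (P1 j) x + X k x * pd u (pd k (P1 j)) x :=
    fun k => pd_mul (hXd k) (differentiable_pd (hP1 j) k) u x
  have hm2 : ∀ k : Fin n, pd u (fun y => P1 k y * pd k (X j) y) x
      = pd u (P1 k) x * pd k (X j) x + P1 k x * pd u (pd k (X j)) x :=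
    fun k => pd_mul (hP1d k) (differentiable_pd (hX j) k) u x
  have e0 : pd u (lieS1 X d P1 j) x
      = pd u (fun y => ((∑ k, X k y * pd k (P1 j) y) - (∑ k, P1 k y * pd k (X j) y))
          + (d * divg X y) * P1 j y) x := rfl
  rw [e0, pd_add hAB hC u x, pd_sub hA hB u x, pd_mul hD (hP1d j) u x,
    pd_const_mul (differentiable_divg hX) d u x,
    pd_sum (F := fun k y => X k y * pd k (P1 j) y) Finset.univ (fun k _ => (hXd k).mul (differentiable_pd (hP1 j) k)) u x,
    pd_sum (F := fun k y => P1 k y * pd k (X j) y) Finset.univ (fun k _ => (hP1d k).mul (differentiable_pd (hX j) k)) u x]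
  simp only [hm1, hm2]

lemma pd_Q1op {P1 : Fin n → (Fin n → ℝ) → ℝ} {P0 f : (Fin n → ℝ) → ℝ}
    (hP1 : ∀ i, ContDiff ℝ (⊤ : ℕ∞) (P1 i)) (hP0 : ContDiff ℝ (⊤ : ℕ∞) P0) (hf : ContDiff ℝ (⊤ : ℕ∞) f)
    (a : ℝ) (x : Fin n → ℝ) (u : Fin n) :
    pd u (Q1op a P1 P0 f) x
      = (∑ j, (pd u (P1 j) x * pd j f x + P1 j x * pd u (pd j f) x))
        + (a * (∑ j, pd u (pd j (P1 j)) x) * f x + a * (∑ j, pd j (P1 j) x) * pd u f x)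
        + (pd u P0 x * f x + P0 x * pd u f x) := by
  have hP1d : ∀ k, Differentiable ℝ (P1 k) := fun k => (hP1 k).differentiable (by simp)
  have hfd : Differentiable ℝ f := hf.differentiable (by simp)
  have hP0d : Differentiable ℝ P0 := hP0.differentiable (by simp)
  have hA : Differentiable ℝ (fun y => ∑ j, P1 j y * pd j f y) :=
    Differentiable.fun_sum fun j _ => (hP1d j).mul (differentiable_pd hf j)
  have hS : Differentiable ℝ (fun y => ∑ j, pd j (P1 j) y) :=
    Differentiable.fun_sum fun j _ => differentiable_pd (hP1 j) j
  have haS : Differentiable ℝ (fun y => a * ∑ j, pd j (P1 j) y) := hS.const_mul a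
  have hB : Differentiable ℝ (fun y => a * (∑ j, pd j (P1 j) y) * f y) := haS.mul hfd
  have hC : Differentiable ℝ (fun y => P0 y * f y) := hP0d.mul hfd
  have hAB : Differentiable ℝ
      (fun y => (∑ j, P1 j y * pd j f y) + a * (∑ j, pd j (P1 j) y) * f y) := hA.add hB
  have hm : ∀ j : Fin n, pd u (fun y => P1 j y * pd j f y) x
      = pd u (P1 j) x * pd j f x + P1 j x * pd u (pd j f) x :=
    fun j => pd_mul (hP1d j) (differentiable_pd hf j) u x
  have e0 : pd u (Q1op a P1 P0 f) x
      = pd u (fun y => ((∑ j, P1 j y * pd j f y) + (a * ∑ j, pd j (P1 j) y) * f y)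
          + P0 y * f y) x := rfl
  rw [e0, pd_add hAB hC u x, pd_add hA hB u x, pd_mul haS hfd u x,
    pd_const_mul hS a u x, pd_mul hP0d hfd u x,
    pd_sum (F := fun j y => P1 j y * pd j f y) Finset.univ (fun j _ => (hP1d j).mul (differentiable_pd hf j)) u x,
    pd_sum Finset.univ (fun j _ => differentiable_pd (hP1 j) j) u x]
  simp only [hm]


end AuxLemmas

/-- for `δ ≠ 1` and `α = λ/(1−δ)`, the first-order quantization
map is equivariant with respect to all smooth vector fields. -/
theorem first_order_quantization_fully_equivariant
    (n : ℕ) (hn : 1 ≤ n) (lam mu dlt : ℝ) (hdlt : dlt = mu - lam) (h1 : dlt ≠ 1)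
    (a : ℝ) (ha : a = lam / (1 - dlt))
    (X : Fin n → (Fin n → ℝ) → ℝ) (hX : ∀ i, ContDiff ℝ (⊤ : ℕ∞) (X i))
    (P1 : Fin n → (Fin n → ℝ) → ℝ) (P0 : (Fin n → ℝ) → ℝ)
    (hP1 : ∀ i, ContDiff ℝ (⊤ : ℕ∞) (P1 i)) (hP0 : ContDiff ℝ (⊤ : ℕ∞) P0)
    (f : (Fin n → ℝ) → ℝ) (hf : ContDiff ℝ (⊤ : ℕ∞) f) (x : Fin n → ℝ) :
    Q1op a (lieS1 X dlt P1) (lieF X dlt P0) f x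
      = lieF X mu (Q1op a P1 P0 f) x - Q1op a P1 P0 (lieF X lam f) x := by
  have ha' : a * (1 - dlt) = lam := by
    rw [ha]; field_simp [sub_ne_zero.2 (Ne.symm h1)]
  show (∑ i, lieS1 X dlt P1 i x * pd i f x)
      + a * (∑ i, pd i (lieS1 X dlt P1 i) x) * f x + lieF X dlt P0 x * f x
    = ((∑ k, X k x * pd k (Q1op a P1 P0 f) x) + mu * divg X x * Q1op a P1 P0 f x)
      - ((∑ i, P1 i x * pd i (lieF X lam f) x)
        + a * (∑ i, pd i (P1 i) x) * lieF X lam f x + P0 x * lieF X lam f x)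
  simp only [pd_lieS1 hX hP1 dlt x, pd_lieF hX hf lam x, pd_Q1op hP1 hP0 hf a x,
    pd_divg hX]
  simp only [Q1op, lieF, lieS1]
  simp only [mul_add, add_mul, mul_sub, sub_mul, Finset.sum_add_distrib,
    Finset.sum_sub_distrib, Finset.mul_sum, Finset.sum_mul]
  ring_nf
  have b1 : ∑ u : Fin n, ∑ v : Fin n, X v x * pd v (P1 u) x * pd u f x
      = ∑ u : Fin n, ∑ v : Fin n, X u x * pd u (P1 v) x * pd v f x := Finset.sum_comm
  have b2 : ∑ u : Fin n, ∑ v : Fin n, P1 v x * pd v (X u) x * pd u f x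
      = ∑ u : Fin n, ∑ v : Fin n, P1 u x * pd u (X v) x * pd v f x := Finset.sum_comm
  have b4 : ∑ u : Fin n, dlt * divg X x * P1 u x * pd u f x
      = dlt * divg X x * ∑ u : Fin n, P1 u x * pd u f x := by
    simp only [Finset.mul_sum]
    exact Finset.sum_congr rfl fun u _ => by ring
  have b6 : ∑ u : Fin n, ∑ v : Fin n, a * pd u (X v) x * pd v (P1 u) x * f x
      = a * f x * ∑ u : Fin n, ∑ v : Fin n, pd u (P1 v) x * pd v (X u) x := by
    rw [Finset.sum_comm]
    simp only [Finset.mul_sum]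
    exact Finset.sum_congr rfl fun u _ => Finset.sum_congr rfl fun v _ => by ring
  have b7 : ∑ u : Fin n, ∑ v : Fin n, a * f x * X v x * pd u (pd v (P1 u)) x
      = a * f x * ∑ u : Fin n, ∑ v : Fin n, X u x * pd u (pd v (P1 v)) x := by
    rw [Finset.sum_comm]
    simp only [Finset.mul_sum]
    exact Finset.sum_congr rfl fun u _ => Finset.sum_congr rfl fun v _ => by
      rw [pd_comm (hP1 v) v u x]; ring
  have b8 : ∑ u : Fin n, ∑ v : Fin n, a * f x * pd u (P1 v) x * pd v (X u) x
      = a * f x * ∑ u : Fin n, ∑ v : Fin n, pd u (P1 v) x * pd v (X u) x := by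
    simp only [Finset.mul_sum]
    exact Finset.sum_congr rfl fun u _ => Finset.sum_congr rfl fun v _ => by ring
  have b9 : ∑ u : Fin n, ∑ v : Fin n, a * f x * P1 v x * pd u (pd v (X u)) x
      = a * f x * ∑ u : Fin n, ∑ v : Fin n, P1 u x * pd u (pd v (X v)) x := by
    rw [Finset.sum_comm]
    simp only [Finset.mul_sum]
    exact Finset.sum_congr rfl fun u _ => Finset.sum_congr rfl fun v _ => by
      rw [pd_comm (hX v) v u x]; ring
  have b10 : ∑ u : Fin n, ∑ v : Fin n, dlt * a * f x * pd u (pd v (X v)) x * P1 u x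
      = dlt * a * f x * ∑ u : Fin n, ∑ v : Fin n, P1 u x * pd u (pd v (X v)) x := by
    simp only [Finset.mul_sum]
    exact Finset.sum_congr rfl fun u _ => Finset.sum_congr rfl fun v _ => by ring
  have b11 : ∑ u : Fin n, dlt * divg X x * a * f x * pd u (P1 u) x
      = dlt * a * divg X x * f x * ∑ u : Fin n, pd u (P1 u) x := by
    simp only [Finset.mul_sum]
    exact Finset.sum_congr rfl fun u _ => by ring
  have c5 : ∑ u : Fin n, ∑ v : Fin n, a * f x * X u x * pd u (pd v (P1 v)) x
      = a * f x * ∑ u : Fin n, ∑ v : Fin n, X u x * pd u (pd v (P1 v)) x := by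
    simp only [Finset.mul_sum]
    exact Finset.sum_congr rfl fun u _ => Finset.sum_congr rfl fun v _ => by ring
  have c6 : ∑ u : Fin n, ∑ v : Fin n, a * X u x * pd v (P1 v) x * pd u f x
      = a * (∑ u : Fin n, pd u (P1 u) x) * ∑ u : Fin n, X u x * pd u f x := by
    simp only [Finset.mul_sum, Finset.sum_mul]
    exact Finset.sum_congr rfl fun u _ => Finset.sum_congr rfl fun v _ => by ring
  have c7 : ∑ u : Fin n, X u x * P0 x * pd u f x
      = P0 x * ∑ u : Fin n, X u x * pd u f x := by
    simp only [Finset.mul_sum]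
    exact Finset.sum_congr rfl fun u _ => by ring
  have c8 : ∑ u : Fin n, divg X x * mu * P1 u x * pd u f x
      = mu * divg X x * ∑ u : Fin n, P1 u x * pd u f x := by
    simp only [Finset.mul_sum]
    exact Finset.sum_congr rfl fun u _ => by ring
  have c9 : ∑ u : Fin n, divg X x * a * f x * mu * pd u (P1 u) x
      = a * mu * divg X x * f x * ∑ u : Fin n, pd u (P1 u) x := by
    simp only [Finset.mul_sum]
    exact Finset.sum_congr rfl fun u _ => by ring
  have c11 : ∑ u : Fin n, ∑ v : Fin n, P1 u x * X v x * pd u (pd v f) x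
      = ∑ u : Fin n, ∑ v : Fin n, X u x * P1 v x * pd u (pd v f) x := by
    rw [Finset.sum_comm]
    exact Finset.sum_congr rfl fun u _ => Finset.sum_congr rfl fun v _ => by
      rw [pd_comm hf v u x]; ring
  have c12 : ∑ u : Fin n, ∑ v : Fin n, f x * P1 u x * lam * pd u (pd v (X v)) x
      = lam * f x * ∑ u : Fin n, ∑ v : Fin n, P1 u x * pd u (pd v (X v)) x := by
    simp only [Finset.mul_sum]
    exact Finset.sum_congr rfl fun u _ => Finset.sum_congr rfl fun v _ => by ring
  have c13 : ∑ u : Fin n, divg X x * lam * P1 u x * pd u f x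
      = lam * divg X x * ∑ u : Fin n, P1 u x * pd u f x := by
    simp only [Finset.mul_sum]
    exact Finset.sum_congr rfl fun u _ => by ring
  have c14 : ∑ u : Fin n, ∑ v : Fin n, a * pd v (P1 v) x * X u x * pd u f x
      = a * (∑ u : Fin n, pd u (P1 u) x) * ∑ u : Fin n, X u x * pd u f x := by
    simp only [Finset.mul_sum, Finset.sum_mul]
    exact Finset.sum_congr rfl fun u _ => Finset.sum_congr rfl fun v _ => by ring
  have c15 : ∑ u : Fin n, divg X x * a * f x * lam * pd u (P1 u) x
      = a * lam * divg X x * f x * ∑ u : Fin n, pd u (P1 u) x := by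
    simp only [Finset.mul_sum]
    exact Finset.sum_congr rfl fun u _ => by ring
  have c16 : ∑ u : Fin n, P0 x * X u x * pd u f x
      = P0 x * ∑ u : Fin n, X u x * pd u f x := by
    simp only [Finset.mul_sum]
    exact Finset.sum_congr rfl fun u _ => by ring
  rw [b1, b2, b4, b6, b7, b8, b9, b10, b11, c5, c6, c8, c9, c11, c12, c13, c14, c15]
  linear_combination (divg X x * P0 x * f x + divg X x * (∑ u : Fin n, P1 u x * pd u f x)
      + a * divg X x * f x * (∑ u : Fin n, pd u (P1 u) x)) * hdlt
    - (f x * ∑ u : Fin n, ∑ v : Fin n, P1 u x * pd u (pd v (X v)) x) * ha'
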